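/- arXiv:2005.12492 — 3 statements merged into one kernel-verified Lean document; each statement's English description precedes it below -/
import Mathlib

section
/- Let r_+ > 0 and let φ : [r_+, ∞) → ℂ be continuously differentiable. Then for any r' > r_+, ∫_{r_+}^{r'} |φ(r)|^2 dr ≤ C ( ∫_{r_+}^{r'} μ(r)^2 r^2 |φ'(r)|^2 dr + (r' - r_+) |φ(r')|^2 ) for some universal constant C, where μ(r) = (r^2 - 2Mr + a^2)/(r^2 + a^2) and r_+ is the larger root of r^2 - 2Mr + a^2 (with 0 ≤ |a| < M). (It suffices to prove the inequality with C an absolute constant depending only on M, a.) -/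
open MeasureTheory

noncomputable def rplus (M a : ℝ) : ℝ := M + Real.sqrt (M^2 - a^2)

noncomputable def muKerr (M a r : ℝ) : ℝ := (r^2 - 2*M*r + a^2) / (r^2 + a^2)

/-!
Integrating `d/dr [(r - r₊) ‖φ‖²] = ‖φ‖² + 2 (r - r₊) ⟪φ, φ'⟫` over `[r₊, r']` and absorbing the
cross term by `2 t x y ≤ x² / 2 + 2 t² y²` gives the weighted Hardy inequality
`∫ ‖φ‖² ≤ 4 ∫ (r - r₊)² ‖φ'‖² + 2 (r' - r₊) ‖φ(r')‖²`. Since `Δ = (r - r₊)(r - r₋)` vanishes only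
simply at `r₊`, the weight `(r - r₊)²` is bounded by a constant multiple of `μ² r²` on `[r₊, ∞)`.
-/

open Set intervalIntegral

section Hardy

variable {F : Type*} [NormedAddCommGroup F] [InnerProductSpace ℝ F]

lemma half_norm_sq_sub_le_norm_sq_add_inner (t : ℝ) (x y : F) :
    2⁻¹ * ‖x‖ ^ 2 - 2 * t ^ 2 * ‖y‖ ^ 2 ≤ ‖x‖ ^ 2 + t * (2 * inner ℝ x y) := by
  have hxy : |t * inner ℝ x y| ≤ |t| * (‖x‖ * ‖y‖) := by
    rw [abs_mul]; gcongr; exact abs_real_inner_le_norm x y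
  nlinarith [neg_abs_le (t * inner ℝ x y), sq_nonneg (‖x‖ - 2 * |t| * ‖y‖), sq_abs t]

theorem integral_norm_sq_le_of_hasDerivAt {φ φ' : ℝ → F} {R b : ℝ} (hRb : R ≤ b)
    (hφ : ∀ r ∈ Icc R b, HasDerivAt φ (φ' r) r) (hφ' : ContinuousOn φ' (Icc R b)) :
    ∫ r in R..b, ‖φ r‖ ^ 2
      ≤ 4 * (∫ r in R..b, (r - R) ^ 2 * ‖φ' r‖ ^ 2) + 2 * ((b - R) * ‖φ b‖ ^ 2) := by
  have hφc : ContinuousOn φ (Icc R b) := fun r hr => (hφ r hr).continuousAt.continuousWithinAt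
  have hint₁ : IntervalIntegrable (fun r => ‖φ r‖ ^ 2) volume R b :=
    (hφc.norm.pow 2).intervalIntegrable_of_Icc hRb
  have hint₂ : IntervalIntegrable (fun r => (r - R) ^ 2 * ‖φ' r‖ ^ 2) volume R b :=
    ((by fun_prop : Continuous fun r : ℝ => (r - R) ^ 2).continuousOn.mul
      (hφ'.norm.pow 2)).intervalIntegrable_of_Icc hRb
  have hFTC : ∫ r in R..b, (2⁻¹ * ‖φ r‖ ^ 2 - 2 * ((r - R) ^ 2 * ‖φ' r‖ ^ 2))
      ≤ (b - R) * ‖φ b‖ ^ 2 - (R - R) * ‖φ R‖ ^ 2 := by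
    refine integral_le_sub_of_hasDeriv_right_of_le hRb
      ((continuousOn_id.sub continuousOn_const).mul (hφc.norm.pow 2))
      (fun r hr => (((hasDerivAt_id r).sub_const R).mul
        (hφ r (Ioo_subset_Icc_self hr)).norm_sq).hasDerivWithinAt)
      ((intervalIntegrable_iff_integrableOn_Icc_of_le hRb).mp
        ((hint₁.const_mul 2⁻¹).sub (hint₂.const_mul 2))) (fun r _ => ?_)
    simpa [mul_assoc] using half_norm_sq_sub_le_norm_sq_add_inner (r - R) (φ r) (φ' r)
  have hsplit : ∫ r in R..b, (2⁻¹ * ‖φ r‖ ^ 2 - 2 * ((r - R) ^ 2 * ‖φ' r‖ ^ 2))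
      = 2⁻¹ * (∫ r in R..b, ‖φ r‖ ^ 2) - 2 * ∫ r in R..b, (r - R) ^ 2 * ‖φ' r‖ ^ 2 := by
    rw [integral_sub (hint₁.const_mul 2⁻¹) (hint₂.const_mul 2), intervalIntegral.integral_const_mul,
      intervalIntegral.integral_const_mul]
  simp only [sub_self, zero_mul, sub_zero] at hFTC
  linarith

end Hardy

section Kerr

variable {M a : ℝ}

lemma sqrt_sq_sub_sq_pos (ha : |a| < M) : 0 < √(M ^ 2 - a ^ 2) := by
  have : a ^ 2 < M ^ 2 := sq_lt_sq' (abs_lt.mp ha).1 (abs_lt.mp ha).2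
  exact Real.sqrt_pos.mpr (by linarith)

lemma rplus_pos (ha : |a| < M) : 0 < rplus M a :=
  add_pos ((abs_nonneg a).trans_lt ha) (sqrt_sq_sub_sq_pos ha)

lemma sqrt_mul_sub_rplus_le (ha : |a| < M) {r : ℝ} (hr : rplus M a ≤ r) :
    √(M ^ 2 - a ^ 2) * (r - rplus M a) ≤ rplus M a * (muKerr M a r * r) := by
  have hM : 0 < M := (abs_nonneg a).trans_lt ha
  set s := √(M ^ 2 - a ^ 2)
  have hs : 0 < s := sqrt_sq_sub_sq_pos ha
  have hs2 : s ^ 2 = M ^ 2 - a ^ 2 := Real.sq_sqrt (Real.sqrt_pos.mp hs).le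
  have hR : rplus M a = M + s := rfl
  have hr0 : 0 < r := (rplus_pos ha).trans_le hr
  have hrM : M + s ≤ r := hR ▸ hr
  have hbracket : 0 ≤ M * r ^ 2 - a ^ 2 * r - s * a ^ 2 := by
    nlinarith [mul_le_mul_of_nonneg_left hrM hM.le]
  have hfactor : (r ^ 2 - 2 * M * r + a ^ 2) * r * (M + s) - s * (r - (M + s)) * (r ^ 2 + a ^ 2)
      = (r - (M + s)) * (M * r ^ 2 - a ^ 2 * r - s * a ^ 2) := by
    linear_combination r ^ 2 * hs2
  unfold muKerr
  rw [hR, div_mul_eq_mul_div, mul_div_assoc', le_div_iff₀ (by positivity)]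
  linarith [mul_nonneg (sub_nonneg.mpr hrM) hbracket]

lemma sub_rplus_sq_le (ha : |a| < M) {r : ℝ} (hr : rplus M a ≤ r) :
    (r - rplus M a) ^ 2 ≤ (rplus M a / √(M ^ 2 - a ^ 2)) ^ 2 * (muKerr M a r ^ 2 * r ^ 2) := by
  have hlin : r - rplus M a ≤ rplus M a / √(M ^ 2 - a ^ 2) * (muKerr M a r * r) := by
    rw [div_mul_eq_mul_div, le_div_iff₀ (sqrt_sq_sub_sq_pos ha)]
    linarith [sqrt_mul_sub_rplus_le ha hr]
  calc (r - rplus M a) ^ 2 ≤ (rplus M a / √(M ^ 2 - a ^ 2) * (muKerr M a r * r)) ^ 2 :=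
        pow_le_pow_left₀ (sub_nonneg.mpr hr) hlin 2
    _ = _ := by ring

lemma continuousOn_muKerr (ha : |a| < M) : ContinuousOn (muKerr M a) (Ici (rplus M a)) := by
  refine ContinuousOn.div (by fun_prop) (by fun_prop) fun r hr => ?_
  have : 0 < r := (rplus_pos ha).trans_le hr
  positivity

lemma integral_sub_rplus_sq_mul_le (ha : |a| < M) {b : ℝ} (hb : rplus M a ≤ b) {f : ℝ → ℝ}
    (hf : ContinuousOn f (Icc (rplus M a) b)) (hf₀ : ∀ r ∈ Icc (rplus M a) b, 0 ≤ f r) :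
    ∫ r in rplus M a..b, (r - rplus M a) ^ 2 * f r
      ≤ (rplus M a / √(M ^ 2 - a ^ 2)) ^ 2 * ∫ r in rplus M a..b, muKerr M a r ^ 2 * r ^ 2 * f r := by
  rw [← intervalIntegral.integral_const_mul]
  refine integral_mono_on hb
    (((by fun_prop : Continuous fun r : ℝ => (r - rplus M a) ^ 2).continuousOn.mul hf
      ).intervalIntegrable_of_Icc hb)
    ((((((continuousOn_muKerr ha).mono Icc_subset_Ici_self).pow 2).mul
      (continuous_pow 2).continuousOn).mul hf).const_mul _ |>.intervalIntegrable_of_Icc hb)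
    fun r hr => ?_
  calc (r - rplus M a) ^ 2 * f r
      ≤ (rplus M a / √(M ^ 2 - a ^ 2)) ^ 2 * (muKerr M a r ^ 2 * r ^ 2) * f r :=
        mul_le_mul_of_nonneg_right (sub_rplus_sq_le ha hr.1) (hf₀ r hr)
    _ = _ := by ring

end Kerr

theorem hardy_trivial_general (M a : ℝ) (ha : |a| < M) :
    ∃ C > 0, ∀ (φ φ' : ℝ → ℂ),
      (∀ r, rplus M a ≤ r → HasDerivAt φ (φ' r) r) →
      ContinuousOn φ' (Set.Ici (rplus M a)) →
      ∀ r', rplus M a < r' →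
        (∫ r in (rplus M a)..r', ‖φ r‖^2)
          ≤ C * ((∫ r in (rplus M a)..r', (muKerr M a r)^2 * r^2 * ‖φ' r‖^2)
              + (r' - rplus M a) * ‖φ r'‖^2) := by
  refine ⟨4 * (rplus M a / √(M ^ 2 - a ^ 2)) ^ 2 + 2, by positivity, fun φ φ' hφ hφ' r' hr' => ?_⟩
  have hφ'Icc : ContinuousOn φ' (Icc (rplus M a) r') := hφ'.mono Icc_subset_Ici_self
  have hardy := integral_norm_sq_le_of_hasDerivAt hr'.le (fun r hr => hφ r hr.1) hφ'Icc
  have hweight := integral_sub_rplus_sq_mul_le ha hr'.le (f := fun r => ‖φ' r‖ ^ 2)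
    (hφ'Icc.norm.pow 2) fun r _ => sq_nonneg ‖φ' r‖
  have hμ : 0 ≤ ∫ r in rplus M a..r', muKerr M a r ^ 2 * r ^ 2 * ‖φ' r‖ ^ 2 :=
    intervalIntegral.integral_nonneg hr'.le fun r _ => by positivity
  have hbdry : 0 ≤ (r' - rplus M a) * ‖φ r'‖ ^ 2 :=
    mul_nonneg (sub_nonneg.mpr hr'.le) (sq_nonneg _)
  set K := (rplus M a / √(M ^ 2 - a ^ 2)) ^ 2
  linarith [mul_nonneg (sq_nonneg _ : 0 ≤ K) hbdry]

/-- Simple Hardy inequality with boundary term: for `φ` C¹ on `[r_+, ∞)` and any `r' > r_+`,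
`∫_{r_+}^{r'} |φ|² dr ≤ C (∫_{r_+}^{r'} μ² r² |φ'|² dr + (r' - r_+)|φ(r')|²)`
for a constant `C` depending only on `M, a`. -/
theorem hardy_trivial (M a : ℝ) (hM : 0 < M) (ha : |a| < M) :
    ∃ C > 0, ∀ (φ φ' : ℝ → ℂ),
      (∀ r, rplus M a ≤ r → HasDerivAt φ (φ' r) r) →
      ContinuousOn φ' (Set.Ici (rplus M a)) →
      ∀ r', rplus M a < r' →
        (∫ r in (rplus M a)..r', ‖φ r‖^2)
          ≤ C * ((∫ r in (rplus M a)..r', (muKerr M a r)^2 * r^2 * ‖φ' r‖^2)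
              + (r' - rplus M a) * ‖φ r'‖^2) :=
  hardy_trivial_general M a ha
end

section
/- Let α < 0 and let h : [r_0, r_1] → ℝ be C^1 with r_0 > 0 and r_0^α |h(r_0)|^2 ≤ D_0. Then -2 α^{-1} r_1^α |h(r_1)|^2 + ∫_{r_0}^{r_1} r^{α-1} |h(r)|^2 dr ≤ (4/α^2) ∫_{r_0}^{r_1} r^{α+1} |h'(r)|^2 dr - 2 α^{-1} D_0. -/
/-!
Integrate `(α⁻¹ r^α h²)' = r^(α-1) h² + 2α⁻¹ r^α h h'` over `[r₀, r₁]` and bound the cross term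
by completing the square: `r^(α-1) h² + 2α⁻¹ r^α h h' ≥ ½ r^(α-1) h² - 2α⁻² r^(α+1) h'²`.
This gives the estimate with boundary term `-2α⁻¹ r₀^α h(r₀)²` for every `α ≠ 0`; when `α < 0`
this term is increasing in `r₀^α h(r₀)²`, so it can be replaced by the bound `D₀`.
-/

open MeasureTheory Set

theorem rpow_sq_div_two_sub_le {α r : ℝ} (hr : 0 < r) (x y : ℝ) :
    r ^ (α - 1) * x ^ 2 / 2 - 2 * α⁻¹ ^ 2 * (r ^ (α + 1) * y ^ 2)
      ≤ r ^ (α - 1) * x ^ 2 + 2 * α⁻¹ * (r ^ α * (x * y)) := by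
  have hsplit : r ^ α = r ^ (α - 1) * r := by
    rw [← Real.rpow_add_one hr.ne', sub_add_cancel]
  have hsq : 0 ≤ r ^ (α - 1) * (x + 2 * α⁻¹ * r * y) ^ 2 := by positivity
  rw [Real.rpow_add_one hr.ne', hsplit]
  nlinarith [hsq]

theorem hasDerivAt_inv_mul_rpow_mul_sq {α r x' : ℝ} {h : ℝ → ℝ} (hα : α ≠ 0) (hr : 0 < r)
    (hh : HasDerivAt h x' r) :
    HasDerivAt (fun r => α⁻¹ * r ^ α * h r ^ 2)
      (r ^ (α - 1) * h r ^ 2 + 2 * α⁻¹ * (r ^ α * (h r * x'))) r := by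
  have hrpow : HasDerivAt (fun r => α⁻¹ * r ^ α) (α⁻¹ * (α * r ^ (α - 1))) r :=
    (Real.hasDerivAt_rpow_const (Or.inl hr.ne')).const_mul α⁻¹
  have hsq : HasDerivAt (fun r => h r ^ 2) (2 * h r * x') r := by simpa using hh.fun_pow 2
  refine (hrpow.mul hsq).congr_deriv ?_
  field_simp

theorem hardy_one_dim {α r0 r1 : ℝ} {h h' : ℝ → ℝ} (hα : α ≠ 0) (hr0 : 0 < r0)
    (hr01 : r0 ≤ r1) (hderiv : ∀ r ∈ Icc r0 r1, HasDerivAt h (h' r) r)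
    (hcont : ContinuousOn h' (Icc r0 r1)) :
    -2 * α⁻¹ * r1 ^ α * h r1 ^ 2 + (∫ r in r0..r1, r ^ (α - 1) * h r ^ 2)
      ≤ 4 / α ^ 2 * (∫ r in r0..r1, r ^ (α + 1) * h' r ^ 2) - 2 * α⁻¹ * (r0 ^ α * h r0 ^ 2) := by
  rw [← uIcc_of_le hr01] at hderiv hcont
  have hpos : ∀ r ∈ uIcc r0 r1, 0 < r := fun r hr => hr0.trans_le (uIcc_of_le hr01 ▸ hr).1
  have hrpow : ∀ p : ℝ, IntervalIntegrable (fun r => r ^ p) volume r0 r1 := fun p =>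
    intervalIntegral.intervalIntegrable_rpow (Or.inr fun h0 => (hpos 0 h0).false)
  have hconth : ContinuousOn h (uIcc r0 r1) := HasDerivAt.continuousOn hderiv
  have hI1 : IntervalIntegrable (fun r => r ^ (α - 1) * h r ^ 2) volume r0 r1 :=
    (hrpow _).mul_continuousOn (hconth.pow 2)
  have hI2 : IntervalIntegrable (fun r => r ^ (α + 1) * h' r ^ 2) volume r0 r1 :=
    (hrpow _).mul_continuousOn (hcont.pow 2)
  have hI3 : IntervalIntegrable (fun r => r ^ α * (h r * h' r)) volume r0 r1 :=
    (hrpow _).mul_continuousOn (hconth.mul hcont)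
  have hFTC := intervalIntegral.integral_eq_sub_of_hasDerivAt
    (fun r hr => hasDerivAt_inv_mul_rpow_mul_sq hα (hpos r hr) (hderiv r hr))
    (hI1.add (hI3.const_mul (2 * α⁻¹)))
  have hmono := intervalIntegral.integral_mono_on hr01
    ((hI1.div_const 2).sub (hI2.const_mul (2 * α⁻¹ ^ 2))) (hI1.add (hI3.const_mul (2 * α⁻¹)))
    fun r hr => rpow_sq_div_two_sub_le (hr0.trans_le hr.1) (h r) (h' r)
  rw [hFTC, intervalIntegral.integral_sub (hI1.div_const 2) (hI2.const_mul _),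
    intervalIntegral.integral_div, intervalIntegral.integral_const_mul] at hmono
  have hcoef : 4 / α ^ 2 = 2 * (2 * α⁻¹ ^ 2) := by ring
  rw [hcoef]
  linarith

/-- One-dimensional Hardy estimate, case `α < 0`: if `r₀^α |h(r₀)|² ≤ D₀`, then
`-2α⁻¹ r₁^α |h(r₁)|² + ∫_{r₀}^{r₁} r^{α-1} |h|² dr ≤ (4/α²) ∫_{r₀}^{r₁} r^{α+1} |h'|² dr - 2α⁻¹ D₀`. -/
theorem hardy_one_dim_neg (α r0 r1 D0 : ℝ) (hα : α < 0) (hr0 : 0 < r0) (hr01 : r0 < r1)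
    (h h' : ℝ → ℝ)
    (hderiv : ∀ r ∈ Set.Icc r0 r1, HasDerivAt h (h' r) r)
    (hcont : ContinuousOn h' (Set.Icc r0 r1))
    (hD0 : r0 ^ α * |h r0|^2 ≤ D0) :
    -2 * α⁻¹ * r1 ^ α * |h r1|^2 + (∫ r in r0..r1, r ^ (α - 1) * |h r|^2)
      ≤ 4 / α^2 * (∫ r in r0..r1, r ^ (α + 1) * |h' r|^2) - 2 * α⁻¹ * D0 := by
  simp only [sq_abs] at hD0 ⊢
  have hboundary : -2 * α⁻¹ * (r0 ^ α * h r0 ^ 2) ≤ -2 * α⁻¹ * D0 :=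
    mul_le_mul_of_nonneg_left hD0 (by linarith [inv_lt_zero.mpr hα])
  linarith [hardy_one_dim hα.ne hr0 hr01.le hderiv hcont]
end

section
/- Let α > 0 and let h : [r_0, r_1] → ℝ be C^1 with r_0 > 0 and r_1^α |h(r_1)|^2 ≤ D_0. Then 2 α^{-1} r_0^α |h(r_0)|^2 + ∫_{r_0}^{r_1} r^{α-1} |h(r)|^2 dr ≤ (4/α^2) ∫_{r_0}^{r_1} r^{α+1} |h'(r)|^2 dr + 2 α^{-1} D_0. -/
/-!
Differentiate `r ^ α * h r ^ 2`: its derivative `α r^(α-1) h² + 2 r^α h h'` dominates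
`(α/2) r^(α-1) h² - (2/α) r^(α+1) h'²`, the difference being the square
`(α/2) r^(α-1) (h + (2/α) r h')²`. Integrating over `[r₀, r₁]` and multiplying by `2/α` gives the
estimate, with the boundary term at `r₁` bounded by `D₀`.
-/

open Set

theorem hasDerivAt_rpow_mul_sq {α r c : ℝ} {h : ℝ → ℝ} (hh : HasDerivAt h c r) (hr : r ≠ 0) :
    HasDerivAt (fun x => x ^ α * h x ^ 2) (α * r ^ (α - 1) * h r ^ 2 + r ^ α * (2 * h r * c)) r := by
  simpa using (Real.hasDerivAt_rpow_const (p := α) (Or.inl hr)).fun_mul (hh.fun_pow 2)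

theorem weighted_sq_sub_le_deriv_rpow_mul_sq {α r : ℝ} (hα : 0 < α) (hr : 0 < r) (a b : ℝ) :
    α / 2 * (r ^ (α - 1) * a ^ 2) - 2 / α * (r ^ (α + 1) * b ^ 2)
      ≤ α * r ^ (α - 1) * a ^ 2 + r ^ α * (2 * a * b) := by
  have hα1 : r ^ α = r ^ (α - 1) * r := by rw [← Real.rpow_add_one hr.ne', sub_add_cancel]
  have hα2 : r ^ (α + 1) = r ^ (α - 1) * r ^ 2 := by
    rw [← Real.rpow_natCast, ← Real.rpow_add hr]; congr 1; push_cast; ring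
  have hsq : α * r ^ (α - 1) * a ^ 2 + r ^ α * (2 * a * b)
      - (α / 2 * (r ^ (α - 1) * a ^ 2) - 2 / α * (r ^ (α + 1) * b ^ 2))
      = α / 2 * r ^ (α - 1) * (a + 2 / α * r * b) ^ 2 := by
    rw [hα1, hα2]; field_simp; ring
  have : 0 ≤ α / 2 * r ^ (α - 1) * (a + 2 / α * r * b) ^ 2 := by positivity
  linarith

theorem weighted_integral_sq_sub_le {α a b : ℝ} {h h' : ℝ → ℝ} (hα : 0 < α) (ha : 0 < a)
    (hab : a ≤ b) (hderiv : ∀ r ∈ Icc a b, HasDerivAt h (h' r) r)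
    (hcont : ContinuousOn h' (Icc a b)) :
    α / 2 * (∫ r in a..b, r ^ (α - 1) * h r ^ 2) - 2 / α * (∫ r in a..b, r ^ (α + 1) * h' r ^ 2)
      ≤ b ^ α * h b ^ 2 - a ^ α * h a ^ 2 := by
  have hpos : ∀ r ∈ Icc a b, 0 < r := fun r hr => ha.trans_le hr.1
  have hF : ∀ r ∈ Icc a b, HasDerivAt (fun x => x ^ α * h x ^ 2)
      (α * r ^ (α - 1) * h r ^ 2 + r ^ α * (2 * h r * h' r)) r :=
    fun r hr => hasDerivAt_rpow_mul_sq (hderiv r hr) (hpos r hr).ne'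
  have hh : ContinuousOn h (Icc a b) := fun r hr => (hderiv r hr).continuousAt.continuousWithinAt
  have hI : ContinuousOn (fun r => r ^ (α - 1) * h r ^ 2) (Icc a b) :=
    (continuousOn_id.rpow_const fun r hr => Or.inl (hpos r hr).ne').mul (hh.pow 2)
  have hJ : ContinuousOn (fun r => r ^ (α + 1) * h' r ^ 2) (Icc a b) :=
    (continuousOn_id.rpow_const fun r hr => Or.inl (hpos r hr).ne').mul (hcont.pow 2)
  have key := intervalIntegral.integral_le_sub_of_hasDeriv_right_of_le hab
    (φ := fun r => α / 2 * (r ^ (α - 1) * h r ^ 2) - 2 / α * (r ^ (α + 1) * h' r ^ 2))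
    (fun r hr => (hF r hr).continuousAt.continuousWithinAt)
    (fun r hr => (hF r (Ioo_subset_Icc_self hr)).hasDerivWithinAt)
    ((continuousOn_const.mul hI).sub (continuousOn_const.mul hJ)).integrableOn_Icc
    (fun r hr => weighted_sq_sub_le_deriv_rpow_mul_sq hα (hpos r (Ioo_subset_Icc_self hr)) _ _)
  rwa [intervalIntegral.integral_sub ((hI.intervalIntegrable_of_Icc hab).const_mul _)
    ((hJ.intervalIntegrable_of_Icc hab).const_mul _), intervalIntegral.integral_const_mul,
    intervalIntegral.integral_const_mul] at key

/-- One-dimensional Hardy estimate, case `α > 0`: if `r₁^α |h(r₁)|² ≤ D₀`, then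
`2α⁻¹ r₀^α |h(r₀)|² + ∫_{r₀}^{r₁} r^{α-1} |h|² dr ≤ (4/α²) ∫_{r₀}^{r₁} r^{α+1} |h'|² dr + 2α⁻¹ D₀`. -/
theorem hardy_one_dim_pos (α r0 r1 D0 : ℝ) (hα : 0 < α) (hr0 : 0 < r0) (hr01 : r0 < r1)
    (h h' : ℝ → ℝ)
    (hderiv : ∀ r ∈ Set.Icc r0 r1, HasDerivAt h (h' r) r)
    (hcont : ContinuousOn h' (Set.Icc r0 r1))
    (hD0 : r1 ^ α * |h r1|^2 ≤ D0) :
    2 * α⁻¹ * r0 ^ α * |h r0|^2 + (∫ r in r0..r1, r ^ (α - 1) * |h r|^2)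
      ≤ 4 / α^2 * (∫ r in r0..r1, r ^ (α + 1) * |h' r|^2) + 2 * α⁻¹ * D0 := by
  simp only [sq_abs] at hD0 ⊢
  have key := (weighted_integral_sq_sub_le hα hr0 hr01.le hderiv hcont).trans
    (sub_le_sub_right hD0 _)
  have hscaled := mul_le_mul_of_nonneg_left key (by positivity : 0 ≤ 2 * α)
  field_simp at hscaled ⊢
  linarith
end
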